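/- Under the feasibility conditions, if m(0) > 0, then the solution does not converge to the empty state: it is not the case that m(t) → 0, p(t) → 0, q(t) → 0 and u(t) → K as t → ∞. -/

import Mathlib

/-!
Since `(m + p)' = (r/K) m(t-τ) u(t-τ)`, the sum `m + p` is nondecreasing as soon as `m` and `u`
are nonnegative, and then `m t + p t ≥ m 0 + p 0 ≥ m 0 > 0`, so `m` and `p` cannot both tend
to `0`. Nonnegativity comes from integrating factors: `u' = -(r/K) m u` is linear in `u`, and
`m' = -(r/K) u m + 2 (r/K) m(t-τ) u(t-τ)` is linear in `m` with a source term that is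
nonnegative on `[0, T + τ]` once `m ≥ 0` on `[-τ, T]`, so the method of steps applies.
-/

open Set Filter Topology Real

theorem monotoneOn_Icc_of_hasDerivAt_nonneg {f f' : ℝ → ℝ} {a b : ℝ}
    (hf : ∀ x ∈ Icc a b, HasDerivAt f (f' x) x) (hf' : ∀ x ∈ Icc a b, 0 ≤ f' x) :
    MonotoneOn f (Icc a b) := by
  refine monotoneOn_of_hasDerivWithinAt_nonneg (f' := f') (convex_Icc a b)
    (fun x hx => (hf x hx).continuousAt.continuousWithinAt) (fun x hx => ?_) (fun x hx => ?_)
  all_goals rw [interior_Icc] at hx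
  · exact (hf x (Ioo_subset_Icc_self hx)).hasDerivWithinAt
  · exact hf' x (Ioo_subset_Icc_self hx)

theorem monotoneOn_mul_exp_neg_integral {f a g : ℝ → ℝ} {T : ℝ} (ha : Continuous a)
    (hf : ∀ t ∈ Icc 0 T, HasDerivAt f (a t * f t + g t) t) (hg : ∀ t ∈ Icc 0 T, 0 ≤ g t) :
    MonotoneOn (fun t => f t * exp (-∫ s in (0 : ℝ)..t, a s)) (Icc 0 T) := by
  refine monotoneOn_Icc_of_hasDerivAt_nonneg
    (f' := fun t => g t * exp (-∫ s in (0 : ℝ)..t, a s)) (fun t ht => ?_) (fun t ht => ?_)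
  · have hexp := ((ha.integral_hasStrictDerivAt 0 t).hasDerivAt.neg).exp
    exact ((hf t ht).mul hexp).congr_deriv (by simp only [Pi.neg_apply]; ring)
  · exact mul_nonneg (hg t ht) (exp_pos _).le

theorem nonneg_of_hasDerivAt_linear {f a g : ℝ → ℝ} {T : ℝ} (ha : Continuous a)
    (hf : ∀ t ∈ Icc 0 T, HasDerivAt f (a t * f t + g t) t) (hg : ∀ t ∈ Icc 0 T, 0 ≤ g t)
    (h0 : 0 ≤ f 0) : ∀ t ∈ Icc 0 T, 0 ≤ f t := by
  intro t ht
  have hmono := monotoneOn_mul_exp_neg_integral ha hf hg ⟨le_rfl, ht.1.trans ht.2⟩ ht ht.1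
  simp only [intervalIntegral.integral_same, neg_zero, exp_zero, mul_one] at hmono
  exact (mul_nonneg_iff_of_pos_right (exp_pos _)).1 (h0.trans hmono)

theorem forall_ge_of_delay_steps {P : ℝ → Prop} {τ : ℝ} (hτ : 0 < τ)
    (hinit : ∀ t ∈ Icc (-τ) 0, P t)
    (hstep : ∀ T, 0 ≤ T → (∀ t ∈ Icc (-τ) T, P t) → ∀ t ∈ Icc (-τ) (T + τ), P t) :
    ∀ t, -τ ≤ t → P t := by
  have hsteps : ∀ n : ℕ, ∀ t ∈ Icc (-τ) (n * τ), P t := by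
    intro n
    induction n with
    | zero => simpa using hinit
    | succ n ih => simpa [add_mul] using hstep _ (by positivity) ih
  intro t ht
  obtain ⟨n, hn⟩ := exists_nat_ge (t / τ)
  exact hsteps n t ⟨ht, (div_le_iff₀ hτ).1 hn⟩

theorem nonneg_of_hasDerivAt_delay {m u : ℝ → ℝ} {c τ : ℝ} (hc : 0 ≤ c) (hτ : 0 < τ)
    (huc : Continuous u)
    (hdm : ∀ t : ℝ, 0 ≤ t →
      HasDerivAt m (-c * m t * u t + 2 * c * m (t - τ) * u (t - τ)) t)
    (hm : ∀ θ ∈ Icc (-τ) 0, 0 ≤ m θ) (hu : ∀ t, -τ ≤ t → 0 ≤ u t) :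
    ∀ t, -τ ≤ t → 0 ≤ m t := by
  refine forall_ge_of_delay_steps hτ hm fun T hT ih t ht => ?_
  rcases lt_or_ge t 0 with htneg | htpos
  · exact ih t ⟨ht.1, by linarith⟩
  refine nonneg_of_hasDerivAt_linear (a := fun s => -c * u s)
    (g := fun s => 2 * c * m (s - τ) * u (s - τ)) (huc.const_mul (-c))
    (fun s hs => (hdm s hs.1).congr_deriv (by ring)) (fun s hs => ?_)
    (hm 0 ⟨by linarith, le_rfl⟩) t ⟨htpos, ht.2⟩
  have hm_delay := ih (s - τ) ⟨by linarith [hs.1], by linarith [hs.2]⟩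
  have hu_delay := hu (s - τ) (by linarith [hs.1])
  positivity

theorem stmt_11_general
    (K r τ : ℝ) (hK : 0 < K) (hr : 0 < r) (hτ : 0 < τ)
    (m p q u : ℝ → ℝ)
    (hmc : Continuous m) (huc : Continuous u)
    (hdm : ∀ t : ℝ, 0 ≤ t →
      HasDerivAt m (-(r / K) * m t * u t + 2 * (r / K) * m (t - τ) * u (t - τ)) t)
    (hdp : ∀ t : ℝ, 0 ≤ t →
      HasDerivAt p ((r / K) * m t * u t - (r / K) * m (t - τ) * u (t - τ)) t)
    (hdu : ∀ t : ℝ, 0 ≤ t → HasDerivAt u (-(r / K) * m t * u t) t)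
    (hmnn : ∀ θ ∈ Set.Icc (-τ) (0 : ℝ), 0 ≤ m θ)
    (hpnn : ∀ θ ∈ Set.Icc (-τ) (0 : ℝ), 0 ≤ p θ)
    (hunn : ∀ θ ∈ Set.Icc (-τ) (0 : ℝ), 0 ≤ u θ)
    (hmpos : 0 < m 0)
:
    ¬ (Filter.Tendsto m Filter.atTop (nhds 0) ∧ Filter.Tendsto p Filter.atTop (nhds 0) ∧
       Filter.Tendsto q Filter.atTop (nhds 0) ∧ Filter.Tendsto u Filter.atTop (nhds K)) := by
  have hc : 0 ≤ r / K := by positivity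
  have hu : ∀ t, -τ ≤ t → 0 ≤ u t := by
    intro t ht
    rcases lt_or_ge t 0 with htneg | htpos
    · exact hunn t ⟨ht, htneg.le⟩
    exact nonneg_of_hasDerivAt_linear (a := fun s => -(r / K) * m s) (g := 0)
      (hmc.const_mul _) (fun s hs => (hdu s hs.1).congr_deriv (by simp))
      (fun _ _ => le_rfl) (hunn 0 ⟨by linarith, le_rfl⟩) t ⟨htpos, le_rfl⟩
  have hm := nonneg_of_hasDerivAt_delay hc hτ huc hdm hmnn hu
  have hmono : ∀ t, 0 ≤ t → m 0 + p 0 ≤ m t + p t := fun t ht =>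
    monotoneOn_Icc_of_hasDerivAt_nonneg (f := fun s => m s + p s)
      (fun s hs => (hdm s hs.1).add (hdp s hs.1)) (fun s hs => by
        have := mul_nonneg (mul_nonneg hc (hm (s - τ) (by linarith [hs.1])))
          (hu (s - τ) (by linarith [hs.1]))
        linarith) ⟨le_rfl, ht⟩ ⟨ht, le_rfl⟩ ht
  rintro ⟨hm_lim, hp_lim, -, -⟩
  have hsum_lim : Tendsto (fun t => m t + p t) atTop (𝓝 0) := by
    simpa using hm_lim.add hp_lim
  have := ge_of_tendsto hsum_lim (eventually_atTop.2 ⟨0, hmono⟩)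
  linarith [hpnn 0 ⟨by linarith, le_rfl⟩]

theorem stmt_11
    (K r τ : ℝ) (hK : 0 < K) (hr : 0 < r) (hτ : 0 < τ)
    (m p q u : ℝ → ℝ)
    (hmc : Continuous m) (hpc : Continuous p) (hqc : Continuous q) (huc : Continuous u)
    (hdm : ∀ t : ℝ, 0 ≤ t →
      HasDerivAt m (-(r / K) * m t * u t + 2 * (r / K) * m (t - τ) * u (t - τ)) t)
    (hdp : ∀ t : ℝ, 0 ≤ t →
      HasDerivAt p ((r / K) * m t * u t - (r / K) * m (t - τ) * u (t - τ)) t)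
    (hdq : ∀ t : ℝ, 0 ≤ t →
      HasDerivAt q ((r / K) * m t * u t - (r / K) * m (t - τ) * u (t - τ)) t)
    (hdu : ∀ t : ℝ, 0 ≤ t → HasDerivAt u (-(r / K) * m t * u t) t)
    (hmnn : ∀ θ ∈ Set.Icc (-τ) (0 : ℝ), 0 ≤ m θ)
    (hpnn : ∀ θ ∈ Set.Icc (-τ) (0 : ℝ), 0 ≤ p θ)
    (hqnn : ∀ θ ∈ Set.Icc (-τ) (0 : ℝ), 0 ≤ q θ)
    (hunn : ∀ θ ∈ Set.Icc (-τ) (0 : ℝ), 0 ≤ u θ)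
    (hsum : m 0 + p 0 + q 0 + u 0 = K)
    (hpin : p 0 = (r / K) * ∫ s in (-τ)..(0 : ℝ), m s * u s)
    (hqin : q 0 = (r / K) * ∫ s in (-τ)..(0 : ℝ), m s * u s)
    (hmpos : 0 < m 0)
:
    ¬ (Filter.Tendsto m Filter.atTop (nhds 0) ∧ Filter.Tendsto p Filter.atTop (nhds 0) ∧
       Filter.Tendsto q Filter.atTop (nhds 0) ∧ Filter.Tendsto u Filter.atTop (nhds K)) :=
  stmt_11_general K r τ hK hr hτ m p q u hmc huc hdm hdp hdu hmnn hpnn hunn hmpos
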